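/- arXiv:1108.3481 — 5 statements merged into one kernel-verified Lean document; each statement's English description precedes it below -/
import Mathlib

section
/- Let G be a group, m a natural number, and (Hᵢ)_{i∈ℕ} a sequence of subgroups of G such that: (a) for every b ∈ G, either the set {i ∈ ℕ : b ∈ Hᵢ} has fewer than m elements or the set {i ∈ ℕ : b ∉ Hᵢ} has fewer than m elements; and (b) for every injective map τ : ℕ → ℕ there exists a group automorphism φ of G with φ(Hᵢ) = H_{τ(i)} for every i ∈ ℕ. Then ⋂_{i∈ℕ} Hᵢ = ⋂_{i=0}^{2m} Hᵢ. -/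
/-- Chain condition (Lemma 3.1(i) of the paper, abstract form): if `(Hᵢ)_{i ∈ ℕ}` is a
sequence of subgroups of `G` such that (a) for every `b ∈ G` either `{i : b ∈ Hᵢ}` or
`{i : b ∉ Hᵢ}` has fewer than `m` elements, and (b) for every injective `τ : ℕ → ℕ`
there is an automorphism `φ` of `G` with `φ(Hᵢ) = H_{τ(i)}` for all `i`, then
`⋂_{i ∈ ℕ} Hᵢ = ⋂_{i=0}^{2m} Hᵢ`. -/
theorem iInf_eq_iInf_le_two_mul_of_counting {G : Type*} [Group G] (m : ℕ)
    (H : ℕ → Subgroup G)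
    (hgs : ∀ b : G,
      ({i : ℕ | b ∈ H i}.Finite ∧ {i : ℕ | b ∈ H i}.ncard < m) ∨
      ({i : ℕ | b ∉ H i}.Finite ∧ {i : ℕ | b ∉ H i}.ncard < m))
    (hind : ∀ τ : ℕ → ℕ, Function.Injective τ →
      ∃ φ : G ≃* G, ∀ i : ℕ, (H i).map φ.toMonoidHom = H (τ i)) :
    (⨅ i : ℕ, H i) = ⨅ i ∈ Set.Iic (2 * m), H i := by
  classical
  refine le_antisymm (le_iInf₂ fun i _ => iInf_le H i) (le_iInf fun j => ?_)
  intro b hb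
  simp only [Subgroup.mem_iInf, Set.mem_Iic] at hb
  by_contra hbj
  rcases hgs b with ⟨hfin, hcard⟩ | ⟨hSfin, hScard⟩
  · have hsub : (↑(Finset.Iic (2 * m)) : Set ℕ) ⊆ {i : ℕ | b ∈ H i} := fun i hi =>
      hb i (Finset.mem_Iic.mp hi)
    have h1 := Set.ncard_le_ncard hsub hfin
    rw [Set.ncard_coe_finset, Nat.card_Iic] at h1
    omega
  · set S : Set ℕ := {i : ℕ | b ∉ H i} with hSdef
    have hcompl : (Sᶜ).Infinite := hSfin.infinite_compl
    let e : ℕ ↪ ↥(Sᶜ) := Set.Infinite.natEmbedding _ hcompl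
    have hj : j ∈ S := hbj
    set τ : ℕ → ℕ → ℕ := fun k i => if i = k then j else (e i : ℕ) with hτdef
    have hτinj : ∀ k, Function.Injective (τ k) := by
      intro k a a' h
      simp only [hτdef] at h
      by_cases ha : a = k <;> by_cases ha' : a' = k
      · omega
      · rw [if_pos ha, if_neg ha'] at h
        exact absurd (h ▸ hj) (e a').2
      · rw [if_neg ha, if_pos ha'] at h
        exact absurd (h ▸ hj) (e a).2
      · rw [if_neg ha, if_neg ha'] at h
        exact e.injective (Subtype.ext h)
    choose φ hφ using fun k => hind (τ k) (hτinj k)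
    set c : ℕ → G := fun k => (φ k).symm b with hcdef
    have hmem : ∀ k i, c k ∈ H i ↔ b ∈ H (τ k i) := by
      intro k i
      rw [← hφ k i, hcdef]
      exact (Subgroup.mem_map_equiv).symm
    have hc1 : ∀ k, c k ∉ H k := by
      intro k hk
      rw [hmem] at hk
      simp only [hτdef, if_pos rfl] at hk
      exact hbj hk
    have hc2 : ∀ k i, i ≠ k → c k ∈ H i := by
      intro k i hik
      rw [hmem]
      have : τ k i = (e i : ℕ) := if_neg hik
      rw [this]
      have h2 : (e i : ℕ) ∉ S := (e i).2
      exact not_not.mp h2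
    set p : ℕ → G := fun n => ((List.range n).map c).prod with hpdef
    have key : ∀ k n, p n ∈ H k ↔ n ≤ k := by
      intro k n
      induction n with
      | zero => simpa [hpdef] using (H k).one_mem
      | succ n ih =>
        have hp : p (n + 1) = p n * c n := by
          simp [hpdef, List.range_succ]
        rw [hp]
        by_cases hnk : n = k
        · subst hnk
          have hpn : p n ∈ H n := ih.mpr le_rfl
          constructor
          · intro h
            exact absurd (by simpa using (H n).mul_mem ((H n).inv_mem hpn) h) (hc1 n)
          · omega
        · have hcn : c n ∈ H k := hc2 n k (Ne.symm hnk)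
          have hiff : p n * c n ∈ H k ↔ p n ∈ H k :=
            ⟨fun h => by simpa using (H k).mul_mem h ((H k).inv_mem hcn),
             fun h => (H k).mul_mem h hcn⟩
          rw [hiff, ih]
          omega
    set d : G := p (2 * m + 1) with hddef
    rcases hgs d with ⟨hfin, _⟩ | ⟨_, hcard⟩
    · have hsub : Set.Ioi (2 * m) ⊆ {i : ℕ | d ∈ H i} := by
        intro i hi
        exact (key i (2 * m + 1)).mpr (Set.mem_Ioi.mp hi)
      exact absurd (hfin.subset hsub) (Set.Ioi_infinite (2 * m))
    · have heq : {i : ℕ | d ∉ H i} = (↑(Finset.Iic (2 * m)) : Set ℕ) := by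
        ext i
        simp only [Set.mem_setOf_eq, Finset.coe_Iic, Set.mem_Iic, hddef, key i (2 * m + 1)]
        omega
      rw [heq, Set.ncard_coe_finset, Nat.card_Iic] at hcard
      omega
end

section
/- Let G be a group, k ≥ 1 and m natural numbers, and for each k-element subset s of ℕ let H_s be a subgroup of G. Assume: (a) for every b ∈ G and every (k−1)-element subset s of ℕ, either the set {i ∈ ℕ ∖ s : b ∈ H_{s∪{i}}} has fewer than m elements or the set {i ∈ ℕ ∖ s : b ∉ H_{s∪{i}}} has fewer than m elements; and (b) for every injective map τ : ℕ → ℕ there exists a group automorphism φ of G with φ(H_s) = H_{τ[s]} for every k-element subset s of ℕ, where τ[s] denotes the image of s under τ. Then there exists a natural number n such that for every subset S of ℕ of cardinality n, the intersection ⋂ H_s over all k-element subsets s of ℕ equals the intersection ⋂ H_s over all k-element subsets s of S. -/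
open Finset

private lemma image_eq_self_of_fix {f : ℕ → ℕ} {u : Finset ℕ} (h : ∀ x ∈ u, f x = x) :
    u.image f = u := by
  rw [Finset.image_congr (g := id) h, Finset.image_id]

private lemma exists_equiv_image (n : ℕ) (S : Finset ℕ) (h : S.card = n) :
    ∃ e : ℕ ≃ ℕ, (Finset.range n).image ⇑e = S := by
  classical
  have e₁ : (↑(Finset.range n) : Set ℕ) ≃ (↑S : Set ℕ) := by
    apply Fintype.equivOfCardEq
    simp [h]
  haveI i1 : Infinite (↥(↑(Finset.range n) : Set ℕ)ᶜ) :=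
    ((Finset.range n).finite_toSet.infinite_compl).to_subtype
  haveI i2 : Infinite (↥(↑S : Set ℕ)ᶜ) :=
    (S.finite_toSet.infinite_compl).to_subtype
  have e₂ : (↥(↑(Finset.range n) : Set ℕ)ᶜ) ≃ (↥(↑S : Set ℕ)ᶜ) :=
    Classical.choice nonempty_equiv_of_countable
  refine ⟨(Equiv.Set.sumCompl (↑(Finset.range n) : Set ℕ)).symm.trans
    ((e₁.sumCongr e₂).trans (Equiv.Set.sumCompl (↑S : Set ℕ))), ?_⟩
  set e : ℕ ≃ ℕ := (Equiv.Set.sumCompl (↑(Finset.range n) : Set ℕ)).symm.trans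
    ((e₁.sumCongr e₂).trans (Equiv.Set.sumCompl (↑S : Set ℕ))) with he
  apply Finset.eq_of_subset_of_card_le
  · intro y hy
    obtain ⟨x, hx, rfl⟩ := Finset.mem_image.mp hy
    have hx' : x ∈ (↑(Finset.range n) : Set ℕ) := hx
    have : e x = ↑(e₁ ⟨x, hx'⟩) := by
      simp only [he, Equiv.trans_apply]
      rw [Equiv.Set.sumCompl_symm_apply_of_mem hx']
      exact Equiv.Set.sumCompl_apply_inl _ _
    rw [this]
    exact (e₁ ⟨x, hx'⟩).2
  · rw [h, Finset.card_image_of_injective _ e.injective, Finset.card_range]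


/-- Chain condition (Lemma 3.1(ii) of the paper, abstract form): subgroups `H_s` of `G`
are indexed by the `k`-element subsets `s` of `ℕ`. Assume (a) for every `b ∈ G` and every
`(k-1)`-element subset `s`, either `{i ∉ s : b ∈ H_{s ∪ {i}}}` or `{i ∉ s : b ∉ H_{s ∪ {i}}}`
has fewer than `m` elements, and (b) for every injective `τ : ℕ → ℕ` there is an
automorphism `φ` of `G` with `φ(H_s) = H_{τ[s]}` for all `k`-element subsets `s`. Then there
is `n` such that for every `n`-element subset `S` of `ℕ`, the intersection of all `H_s` over
`k`-element `s ⊆ ℕ` equals the intersection over `k`-element `s ⊆ S`. -/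
theorem iInf_eq_iInf_subsets_of_counting {G : Type*} [Group G] (k m : ℕ) (hk : 1 ≤ k)
    (H : Finset ℕ → Subgroup G)
    (hgs : ∀ b : G, ∀ s : Finset ℕ, s.card = k - 1 →
      ({i : ℕ | i ∉ s ∧ b ∈ H (insert i s)}.Finite ∧
        {i : ℕ | i ∉ s ∧ b ∈ H (insert i s)}.ncard < m) ∨
      ({i : ℕ | i ∉ s ∧ b ∉ H (insert i s)}.Finite ∧
        {i : ℕ | i ∉ s ∧ b ∉ H (insert i s)}.ncard < m))
    (hind : ∀ τ : ℕ → ℕ, Function.Injective τ →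
      ∃ φ : G ≃* G, ∀ s : Finset ℕ, s.card = k →
        (H s).map φ.toMonoidHom = H (s.image τ)) :
    ∃ n : ℕ, ∀ S : Finset ℕ, S.card = n →
      (⨅ (s : Finset ℕ) (_ : s.card = k), H s) =
        ⨅ (s : Finset ℕ) (_ : s.card = k ∧ s ⊆ S), H s := by
  classical
  -- Step 1: the one-step chain lemma.
  have lemA : ∀ n : ℕ, m + k ≤ n → ∀ b : G,
      (∀ u : Finset ℕ, u.card = k → u ⊆ Finset.range n → b ∈ H u) →
      ∀ t : Finset ℕ, t.card = k → t ⊆ Finset.range (n + 1) → b ∈ H t := by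
    intro n hn b hb t ht htsub
    by_cases htn : t ⊆ Finset.range n
    · exact hb t ht htn
    have hnt : n ∈ t := by
      obtain ⟨x, hxt, hxn⟩ := Finset.not_subset.mp htn
      have h1 := Finset.mem_range.mp (htsub hxt)
      have h2 : ¬ x < n := fun hc => hxn (Finset.mem_range.mpr hc)
      have : x = n := by omega
      rwa [this] at hxt
    set s : Finset ℕ := t.erase n with hs_def
    have hs_card : s.card = k - 1 := by rw [hs_def, Finset.card_erase_of_mem hnt, ht]
    have hs_sub : s ⊆ Finset.range n := by
      intro x hx
      have hx1 := Finset.mem_range.mp (htsub (Finset.erase_subset _ _ hx))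
      have hx2 := Finset.ne_of_mem_erase hx
      exact Finset.mem_range.mpr (by omega)
    have hns : n ∉ s := Finset.notMem_erase _ _
    have ht_eq : insert n s = t := Finset.insert_erase hnt
    -- the counting hypothesis resolved for elements of K[n]
    have key : ∀ c : G, (∀ u : Finset ℕ, u.card = k → u ⊆ Finset.range n → c ∈ H u) →
        {i : ℕ | i ∉ s ∧ c ∉ H (insert i s)}.Finite ∧
          {i : ℕ | i ∉ s ∧ c ∉ H (insert i s)}.ncard < m := by
      intro c hc
      rcases hgs c s hs_card with ⟨hfin, hlt⟩ | h
      · exfalso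
        have hsubA : ↑(Finset.range n \ s) ⊆ {i : ℕ | i ∉ s ∧ c ∈ H (insert i s)} := by
          intro i hi
          rw [Finset.mem_coe, Finset.mem_sdiff] at hi
          refine ⟨hi.2, hc _ ?_ ?_⟩
          · rw [Finset.card_insert_of_notMem hi.2, hs_card]; omega
          · intro x hx
            rcases Finset.mem_insert.mp hx with rfl | hx'
            · exact hi.1
            · exact hs_sub hx'
        have hA : m ≤ ((Finset.range n \ s : Finset ℕ) : Set ℕ).ncard := by
          rw [Set.ncard_coe_finset, Finset.card_sdiff_of_subset hs_sub, Finset.card_range, hs_card]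
          omega
        have := Set.ncard_le_ncard hsubA hfin
        omega
      · exact h
    obtain ⟨hBfin, hBlt⟩ := key b hb
    by_contra hbt
    -- pick m fresh indices
    have hinf : ({i : ℕ | i ∉ s ∧ b ∉ H (insert i s)} ∪ ↑(Finset.range (n + 1)) ∪ ↑s)ᶜ.Infinite :=
      Set.Finite.infinite_compl ((hBfin.union (Finset.finite_toSet _)).union (Finset.finite_toSet _))
    obtain ⟨E, hEsub, hEcard⟩ := hinf.exists_subset_card_eq m
    have hEfacts : ∀ a ∈ E, a ∉ s ∧ a ≠ n ∧ (¬ a < n + 1) ∧ b ∈ H (insert a s) := by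
      intro a ha
      have := hEsub ha
      simp only [Set.mem_compl_iff, Set.mem_union, Set.mem_setOf_eq, Finset.mem_coe,
        Finset.mem_range, not_or] at this
      obtain ⟨⟨hBad, hrng⟩, hss⟩ := this
      refine ⟨hss, by omega, hrng, ?_⟩
      by_contra hcon
      exact hBad ⟨hss, hcon⟩
    -- for each fresh index a, an element c a failing exactly at (insert a s) among fresh spots
    have hsw : ∀ a : ℕ, ∃ c : G, a ∈ E →
        ((∀ u : Finset ℕ, u.card = k → u ⊆ Finset.range n → c ∈ H u) ∧
         c ∉ H (insert a s) ∧
         (∀ i : ℕ, i ∉ s → i ≠ n → i ≠ a → b ∈ H (insert i s) → c ∈ H (insert i s))) := by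
      intro a
      by_cases ha : a ∈ E
      swap
      · exact ⟨1, fun h => absurd h ha⟩
      obtain ⟨has, han, harng, hab⟩ := hEfacts a ha
      obtain ⟨φ, hφ⟩ := hind ⇑(Equiv.swap n a) (Equiv.injective _)
      refine ⟨φ b, fun _ => ⟨?_, ?_, ?_⟩⟩
      · intro u hu hun
        have himg : u.image ⇑(Equiv.swap n a) = u := by
          apply image_eq_self_of_fix
          intro x hx
          have hxn := Finset.mem_range.mp (hun hx)
          exact Equiv.swap_apply_of_ne_of_ne (by omega) (by omega)
        have := Subgroup.mem_map_of_mem φ.toMonoidHom (hb u hu hun)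
        rwa [hφ u hu, himg] at this
      · have hcard : (insert n s).card = k := by
          rw [Finset.card_insert_of_notMem hns, hs_card]; omega
        have himg : (insert n s).image ⇑(Equiv.swap n a) = insert a s := by
          rw [Finset.image_insert, Equiv.swap_apply_left]
          congr 1
          apply image_eq_self_of_fix
          intro x hx
          have hxn := Finset.mem_range.mp (hs_sub hx)
          exact Equiv.swap_apply_of_ne_of_ne (by omega) (by omega)
        intro hcon
        rw [← himg, ← hφ _ hcard, Subgroup.mem_map_equiv] at hcon
        rw [MulEquiv.symm_apply_apply] at hcon
        rw [ht_eq] at hcon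
        exact hbt hcon
      · intro i his hin hia hbi
        have hcard : (insert i s).card = k := by
          rw [Finset.card_insert_of_notMem his, hs_card]; omega
        have himg : (insert i s).image ⇑(Equiv.swap n a) = insert i s := by
          apply image_eq_self_of_fix
          intro x hx
          rcases Finset.mem_insert.mp hx with rfl | hx'
          · exact Equiv.swap_apply_of_ne_of_ne hin hia
          · have hxn := Finset.mem_range.mp (hs_sub hx')
            exact Equiv.swap_apply_of_ne_of_ne (by omega) (by omega)
        have := Subgroup.mem_map_of_mem φ.toMonoidHom hbi
        rwa [hφ _ hcard, himg] at this
    choose c hc using hsw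
    set L : List ℕ := E.toList with hL_def
    set d : G := (L.map c).prod with hd_def
    have hd1 : ∀ u : Finset ℕ, u.card = k → u ⊆ Finset.range n → d ∈ H u := by
      intro u hu hun
      apply list_prod_mem
      intro x hx
      obtain ⟨a, haL, rfl⟩ := List.mem_map.mp hx
      exact ((hc a (Finset.mem_toList.mp haL)).1) u hu hun
    have hd2 : ∀ a ∈ E, d ∉ H (insert a s) := by
      intro a haE hdmem
      obtain ⟨l₁, l₂, hLsplit⟩ := List.append_of_mem (Finset.mem_toList.mpr haE)
      have hnd : L.Nodup := Finset.nodup_toList E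
      rw [hL_def, hLsplit] at hnd
      have hnd' := List.nodup_append'.mp hnd
      have ha1 : a ∉ l₁ := fun h => (hnd'.2.2 h (List.mem_cons_self)).elim
      have ha2 : a ∉ l₂ := (List.nodup_cons.mp hnd'.2.1).1
      have hmem : ∀ a' ∈ l₁ ++ l₂, c a' ∈ H (insert a s) := by
        intro a' ha'
        have ha'L : a' ∈ L := by
          rw [hL_def, hLsplit]
          rcases List.mem_append.mp ha' with h | h
          · exact List.mem_append.mpr (Or.inl h)
          · exact List.mem_append.mpr (Or.inr (List.mem_cons_of_mem _ h))
        have ha'E : a' ∈ E := Finset.mem_toList.mp ha'L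
        have ha'ne : a ≠ a' := by
          rintro rfl
          rcases List.mem_append.mp ha' with h | h
          · exact ha1 h
          · exact ha2 h
        obtain ⟨has, han, _, hab⟩ := hEfacts a haE
        exact (hc a' ha'E).2.2 a has han ha'ne hab
      have hx1 : (l₁.map c).prod ∈ H (insert a s) :=
        list_prod_mem (fun x hx => by
          obtain ⟨a', ha', rfl⟩ := List.mem_map.mp hx
          exact hmem a' (List.mem_append.mpr (Or.inl ha')))
      have hx2 : (l₂.map c).prod ∈ H (insert a s) :=
        list_prod_mem (fun x hx => by
          obtain ⟨a', ha', rfl⟩ := List.mem_map.mp hx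
          exact hmem a' (List.mem_append.mpr (Or.inr ha')))
      have hd_eq : d = (l₁.map c).prod * (c a * (l₂.map c).prod) := by
        rw [hd_def, hL_def, hLsplit, List.map_append, List.prod_append, List.map_cons, List.prod_cons]
      have hca : c a = ((l₁.map c).prod)⁻¹ * d * ((l₂.map c).prod)⁻¹ := by
        rw [hd_eq]; group
      have : c a ∈ H (insert a s) := by
        rw [hca]
        exact mul_mem (mul_mem (inv_mem hx1) hdmem) (inv_mem hx2)
      exact (hc a haE).2.1 this
    obtain ⟨hDfin, hDlt⟩ := key d hd1
    have hEsubD : ↑E ⊆ {i : ℕ | i ∉ s ∧ d ∉ H (insert i s)} := by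
      intro a ha
      rw [Finset.mem_coe] at ha
      exact ⟨(hEfacts a ha).1, hd2 a ha⟩
    have := Set.ncard_le_ncard hEsubD hDfin
    rw [Set.ncard_coe_finset, hEcard] at this
    omega
  -- Step 2: all of the infimum is captured by range (m+k)
  have lemB : ∀ b : G, (∀ u : Finset ℕ, u.card = k → u ⊆ Finset.range (m + k) → b ∈ H u) →
      ∀ t : Finset ℕ, t.card = k → b ∈ H t := by
    intro b hb t ht
    have hN : ∀ N : ℕ, ∀ t : Finset ℕ, t.card = k → t ⊆ Finset.range (m + k + N) → b ∈ H t := by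
      intro N
      induction N with
      | zero => exact fun t ht h => hb t ht h
      | succ N ih =>
        intro t ht hsub
        exact lemA (m + k + N) (by omega) b (fun u hu hsu => ih u hu hsu) t ht hsub
    refine hN (t.sup id + 1) t ht (fun x hx => Finset.mem_range.mpr ?_)
    have := Finset.le_sup (f := id) hx
    simp only [id] at this
    omega
  -- Step 3: assemble
  refine ⟨m + k, fun S hS => ?_⟩
  obtain ⟨e, he⟩ := exists_equiv_image (m + k) S hS
  obtain ⟨φ, hφ⟩ := hind ⇑e e.injective
  apply le_antisymm
  · exact le_iInf fun s => le_iInf fun hs => iInf₂_le s hs.1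
  · refine le_iInf fun t => le_iInf fun ht => ?_
    rw [SetLike.le_def]
    intro b hb
    have hbS : ∀ u : Finset ℕ, u.card = k → u ⊆ S → b ∈ H u := by
      intro u hu hus
      have h1 := Subgroup.mem_iInf.mp hb u
      exact Subgroup.mem_iInf.mp h1 ⟨hu, hus⟩
    have hb' : ∀ u : Finset ℕ, u.card = k → u ⊆ Finset.range (m + k) → φ.symm b ∈ H u := by
      intro u hu hun
      rw [← Subgroup.mem_map_equiv, hφ u hu]
      refine hbS _ ?_ ?_
      · rw [Finset.card_image_of_injective _ e.injective, hu]
      · rw [← he]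
        exact Finset.image_subset_image hun
    have hcard' : (t.image ⇑e.symm).card = k := by
      rw [Finset.card_image_of_injective _ e.symm.injective, ht]
    have hmem' : φ.symm b ∈ H (t.image ⇑e.symm) := lemB (φ.symm b) hb' _ hcard'
    have himg2 : (t.image ⇑e.symm).image ⇑e = t := by
      rw [Finset.image_image]
      have : ∀ x ∈ t, (⇑e ∘ ⇑e.symm) x = x := fun x _ => e.apply_symm_apply x
      rw [Finset.image_congr (g := id) this, Finset.image_id]
    have : b ∈ (H (t.image ⇑e.symm)).map φ.toMonoidHom := by
      rw [Subgroup.mem_map_equiv]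
      exact hmem'
    rwa [hφ _ hcard', himg2] at this
end

section
/- Let X be a topological space, y₀ a point of X, and F a nontrivial group equipped with the discrete topology. Let f₁, …, fₙ : X → F be finitely many continuous functions all taking the same value at y₀, i.e. f₁(y₀) = f₂(y₀) = … = fₙ(y₀). Then there exists a continuous function h : X → F with h not identically equal to the identity of F such that h commutes with each fᵢ under pointwise multiplication, i.e. h(x)·fᵢ(x) = fᵢ(x)·h(x) for all x ∈ X and all i. -/
/-- If finitely many continuous functions `f₁, …, fₙ : X → F` (with `F` a nontrivial
discrete group) all take the same value at a point `y₀`, then there is a continuous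
`h : X → F`, not identically the identity, commuting pointwise with each `fᵢ`. -/
theorem exists_continuous_commuting_of_eq_at_point {X : Type*} [TopologicalSpace X]
    (y₀ : X) {F : Type*} [Group F] [Nontrivial F] [TopologicalSpace F]
    [DiscreteTopology F] {n : ℕ} (f : Fin n → C(X, F))
    (hval : ∀ i j : Fin n, f i y₀ = f j y₀) :
    ∃ h : C(X, F), (∃ x : X, h x ≠ 1) ∧
      ∀ (i : Fin n) (x : X), h x * f i x = f i x * h x := by
  -- choose c ≠ 1 commuting with all the values f i y₀
  obtain ⟨c, hc1, hcc⟩ : ∃ c : F, c ≠ 1 ∧ ∀ i : Fin n, Commute c (f i y₀) := by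
    rcases Nat.eq_zero_or_pos n with hn | hn
    · obtain ⟨c, hc⟩ := exists_ne (1 : F)
      exact ⟨c, hc, fun i => absurd i.2 (by omega)⟩
    · set a := f ⟨0, hn⟩ y₀ with ha
      by_cases h1 : a = 1
      · obtain ⟨c, hc⟩ := exists_ne (1 : F)
        refine ⟨c, hc, fun i => ?_⟩
        rw [← hval ⟨0, hn⟩ i, ← ha, h1]; exact Commute.one_right c
      · refine ⟨a, h1, fun i => ?_⟩
        rw [← hval ⟨0, hn⟩ i, ← ha]
  set U : Set X := ⋂ i : Fin n, (f i) ⁻¹' {f i y₀} with hUdef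
  have hU : IsClopen U := isClopen_iInter_of_finite fun i =>
    (isClopen_discrete {f i y₀}).preimage (f i).continuous
  classical
  have hcont : Continuous fun x => if x ∈ U then c else (1 : F) := by
    apply IsLocallyConstant.continuous
    intro s
    by_cases hcs : c ∈ s <;> by_cases h1s : (1 : F) ∈ s
    · have : (fun x => if x ∈ U then c else (1 : F)) ⁻¹' s = Set.univ := by
        ext x; by_cases hx : x ∈ U <;> simp [hx, hcs, h1s]
      rw [this]; exact isOpen_univ
    · have : (fun x => if x ∈ U then c else (1 : F)) ⁻¹' s = U := by
        ext x; by_cases hx : x ∈ U <;> simp [hx, hcs, h1s]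
      rw [this]; exact hU.isOpen
    · have : (fun x => if x ∈ U then c else (1 : F)) ⁻¹' s = Uᶜ := by
        ext x; by_cases hx : x ∈ U <;> simp [hx, hcs, h1s]
      rw [this]; exact hU.compl.isOpen
    · have : (fun x => if x ∈ U then c else (1 : F)) ⁻¹' s = ∅ := by
        ext x; by_cases hx : x ∈ U <;> simp [hx, hcs, h1s]
      rw [this]; exact isOpen_empty
  refine ⟨⟨fun x => if x ∈ U then c else 1, hcont⟩, ⟨y₀, ?_⟩, fun i x => ?_⟩
  · have hy : y₀ ∈ U := Set.mem_iInter.mpr fun i => rfl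
    simpa [hy] using hc1
  · by_cases hx : x ∈ U
    · have hfx : f i x = f i y₀ := Set.mem_iInter.mp hx i
      simp only [ContinuousMap.coe_mk, hx, if_true, hfx]
      exact hcc i
    · simp [hx]
end

section
/- Let F be a nontrivial finite group equipped with the discrete topology, X a topological space, y₀ a point of X, k ≥ 1 and n natural numbers, and w an element of the free group on k generators, inducing a word map w : C(X,F)^k → C(X,F) by substitution. Then there exists a natural number R such that for all continuous functions f₁, …, f_R : X → F there exist indices 1 ≤ i₁ < … < iₙ ≤ R and a continuous function h : X → F, not identically equal to the identity of F, such that h commutes (under pointwise multiplication) with w(f_{i_{j₁}}, …, f_{i_{j_k}}) for all 1 ≤ j₁ < … < j_k ≤ n. -/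
/-- A discrete group is a topological group. -/
instance discreteTopologicalGroup {F : Type*} [Group F] [TopologicalSpace F]
    [DiscreteTopology F] : IsTopologicalGroup F := {}

/-- Evaluation at a point as a monoid hom on `C(X,F)`. -/
def evalHom {X : Type*} [TopologicalSpace X] {F : Type*} [Group F] [TopologicalSpace F]
    [IsTopologicalGroup F] (x : X) : C(X, F) →* F where
  toFun g := g x
  map_one' := rfl
  map_mul' _ _ := rfl

theorem lift_eval {X : Type*} [TopologicalSpace X] {F : Type*} [Group F] [TopologicalSpace F]
    [IsTopologicalGroup F] {k : ℕ} (g : Fin k → C(X, F)) (w : FreeGroup (Fin k)) (x : X) :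
    (FreeGroup.lift g w) x = FreeGroup.lift (fun t => g t x) w := by
  have : (evalHom x).comp (FreeGroup.lift g) = FreeGroup.lift (fun t => g t x) := by
    apply FreeGroup.ext_hom
    intro a
    simp [evalHom]
    rfl
  exact DFunLike.congr_fun this w

/-- Ramsey-type statement for word maps on `C(X,F)` (`F` a nontrivial finite discrete
group): for every word `w` in `k ≥ 1` letters and every `n`, there is `R` such that among
any `R` continuous functions `f₁, …, f_R : X → F` one can find indices
`i₁ < … < iₙ` and a continuous `h : X → F`, not identically the identity, commuting
pointwise with `w(f_{i_{j₁}}, …, f_{i_{j_k}})` for all `j₁ < … < j_k` from `{1, …, n}`. -/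
theorem exists_ramsey_bound_for_word_centralizers {X : Type*} [TopologicalSpace X]
    (y₀ : X) {F : Type*} [Group F] [Finite F] [Nontrivial F] [TopologicalSpace F]
    [DiscreteTopology F] (k n : ℕ) (hk : 1 ≤ k) (w : FreeGroup (Fin k)) :
    ∃ R : ℕ, ∀ f : Fin R → C(X, F),
      ∃ ι : Fin n → Fin R, StrictMono ι ∧
        ∃ h : C(X, F), (∃ x : X, h x ≠ 1) ∧
          ∀ j : Fin k → Fin n, StrictMono j → ∀ x : X,
            h x * (FreeGroup.lift (fun t => f (ι (j t))) w) x =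
              (FreeGroup.lift (fun t => f (ι (j t))) w) x * h x := by
  classical
  cases nonempty_fintype F
  refine ⟨Fintype.card F * n + 1, fun f => ?_⟩
  -- pigeonhole: find a value `a` attained at `y₀` by at least `n` of the functions
  obtain ⟨a, ha⟩ := Fintype.exists_lt_card_fiber_of_mul_lt_card
    (f := fun i : Fin (Fintype.card F * n + 1) => f i y₀) (n := n) (by simp)
  set s : Finset (Fin (Fintype.card F * n + 1)) := {x | f x y₀ = a} with hs
  obtain ⟨t, hts, htcard⟩ := Finset.exists_subset_card_eq (le_of_lt ha)
  set ι : Fin n → Fin (Fintype.card F * n + 1) := ⇑(t.orderEmbOfFin htcard) with hι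
  have hιmem : ∀ i, f (ι i) y₀ = a := by
    intro i
    have := hts (t.orderEmbOfFin_mem htcard i)
    simpa [hs, hι] using this
  -- the common value of the word at `y₀`
  set c : F := FreeGroup.lift (fun _ : Fin k => a) w with hc
  have hval : ∀ j : Fin k → Fin n, (FreeGroup.lift (fun t => f (ι (j t))) w) y₀ = c := by
    intro j
    rw [lift_eval]
    rw [show (fun t => f (ι (j t)) y₀) = fun _ : Fin k => a from funext fun u => hιmem (j u)]
  -- the clopen set where all the word maps take value `c`
  set V : Set X := ⋂ j : {j : Fin k → Fin n // StrictMono j},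
    (fun x => (FreeGroup.lift (fun t => f (ι (j.1 t))) w) x) ⁻¹' {c} with hV
  have hy₀V : y₀ ∈ V := by
    simp only [hV, Set.mem_iInter, Set.mem_preimage, Set.mem_singleton_iff]
    intro j
    exact hval j.1
  have hVmem : ∀ x ∈ V, ∀ j : Fin k → Fin n, StrictMono j →
      (FreeGroup.lift (fun t => f (ι (j t))) w) x = c := by
    intro x hx j hj
    simp only [hV, Set.mem_iInter, Set.mem_preimage, Set.mem_singleton_iff] at hx
    exact hx ⟨j, hj⟩
  have hVclopen : IsClopen V := by
    constructor
    · exact isClosed_iInter fun j => IsClosed.preimage (FreeGroup.lift (fun t => f (ι (j.1 t))) w).continuous (isClosed_discrete _)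
    · exact isOpen_iInter_of_finite fun j => IsOpen.preimage (FreeGroup.lift (fun t => f (ι (j.1 t))) w).continuous (isOpen_discrete _)
  -- choose a nontrivial element commuting with `c`
  obtain ⟨d, hd1, hdc⟩ : ∃ d : F, d ≠ 1 ∧ d * c = c * d := by
    by_cases hc1 : c = 1
    · obtain ⟨d, hd⟩ := exists_ne (1 : F)
      exact ⟨d, hd, by simp [hc1]⟩
    · exact ⟨c, hc1, rfl⟩
  set h : C(X, F) := ⟨fun x => if x ∈ V then d else 1, by
    apply Continuous.if
    · intro x hx
      rw [show {x | x ∈ V} = V from rfl, hVclopen.frontier_eq] at hx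
      exact absurd hx (Set.notMem_empty x)
    · exact continuous_const
    · exact continuous_const⟩ with hh
  refine ⟨ι, (t.orderEmbOfFin htcard).strictMono, h, ⟨y₀, ?_⟩, ?_⟩
  · simp only [hh, ContinuousMap.coe_mk, if_pos hy₀V]
    exact hd1
  · intro j hj x
    by_cases hx : x ∈ V
    · simp only [hh, ContinuousMap.coe_mk, if_pos hx, hVmem x hx j hj]
      exact hdc
    · simp [hh, if_neg hx]
end

section
/- Let G be a group, N a normal subgroup of G, π : G → G/N the quotient homomorphism, and l a natural number. Let g₀, …, g_{2^{l+1}−1} be elements of G such that the subgroup of G/N generated by all the commutators [π(g_i), π(g_j)] for i < j < 2^{l+1} is solvable of derived length at most l (i.e. its l-th derived subgroup is trivial). Then the iterated commutator δ_{l+1}(g₀, …, g_{2^{l+1}−1}) belongs to N. -/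
open scoped commutatorElement

/-- The iterated commutator `δ_l : G^{2^l} → G`, defined by `δ₀(a₁) = a₁` and
`δ_{l+1}(a₁, …, a_{2^{l+1}}) = [δ_l(a₁, …, a_{2^l}), δ_l(a_{2^l+1}, …, a_{2^{l+1}})]`. -/
def iteratedCommutator {G : Type*} [Group G] : ∀ l : ℕ, (Fin (2 ^ l) → G) → G
  | 0, a => a 0
  | l + 1, a =>
      ⁅iteratedCommutator l fun i => a ⟨i.1, by have := i.2; rw [pow_succ]; omega⟩,
       iteratedCommutator l fun i => a ⟨2 ^ l + i.1, by have := i.2; rw [pow_succ]; omega⟩⁆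

lemma map_iteratedCommutator {G H : Type*} [Group G] [Group H] (f : G →* H) :
    ∀ (l : ℕ) (a : Fin (2 ^ l) → G),
      f (iteratedCommutator l a) = iteratedCommutator l (f ∘ a)
  | 0, a => rfl
  | l + 1, a => by
      simp only [iteratedCommutator, map_commutatorElement, map_iteratedCommutator f l]
      rfl

lemma iteratedCommutator_mem_map_derivedSeries {G : Type*} [Group G] (H : Subgroup G) :
    ∀ (k : ℕ) (a : Fin (2 ^ (k + 1)) → G),
      (∀ i j : Fin (2 ^ (k + 1)), i < j → ⁅a i, a j⁆ ∈ H) →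
      iteratedCommutator (k + 1) a ∈ (derivedSeries H k).map H.subtype
  | 0, a, h => ⟨⟨⁅a 0, a 1⁆, h 0 1 (by decide)⟩, Subgroup.mem_top _, rfl⟩
  | k + 1, a, h => by
      have e : 2 ^ (k + 1 + 1) = 2 ^ (k + 1) * 2 := pow_succ 2 (k + 1)
      have hL := iteratedCommutator_mem_map_derivedSeries H k
        (fun i => a ⟨i.1, by have := i.2; omega⟩)
        (fun i j hij => h _ _ (Fin.mk_lt_mk.mpr hij))
      have hR := iteratedCommutator_mem_map_derivedSeries H k
        (fun i => a ⟨2 ^ (k + 1) + i.1, by have := i.2; omega⟩)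
        (fun i j hij => h _ _ (Fin.mk_lt_mk.mpr (Nat.add_lt_add_left hij _)))
      obtain ⟨x, hx, hx'⟩ := hL
      obtain ⟨y, hy, hy'⟩ := hR
      refine ⟨⁅x, y⁆, ?_, by rw [map_commutatorElement, hx', hy']; rfl⟩
      rw [derivedSeries_succ]
      exact Subgroup.commutator_mem_commutator hx hy

/-- If `N` is a normal subgroup of `G`, `π : G → G/N` the quotient map, and
`g₀, …, g_{2^{l+1}-1}` are elements of `G` such that the subgroup of `G/N` generated by
the commutators `[π(gᵢ), π(gⱼ)]` for `i < j` is solvable of derived length at most `l`,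
then the iterated commutator `δ_{l+1}(g₀, …, g_{2^{l+1}-1})` belongs to `N`. -/
theorem iteratedCommutator_mem_of_derivedSeries_closure_commutators_eq_bot
    {G : Type*} [Group G] (N : Subgroup G) [N.Normal] (l : ℕ)
    (g : Fin (2 ^ (l + 1)) → G)
    (hsolv : derivedSeries
      (Subgroup.closure {x : G ⧸ N | ∃ i j : Fin (2 ^ (l + 1)), i < j ∧
        x = ⁅QuotientGroup.mk' N (g i), QuotientGroup.mk' N (g j)⁆}) l = ⊥) :
    iteratedCommutator (l + 1) g ∈ N := by
  set H := Subgroup.closure {x : G ⧸ N | ∃ i j : Fin (2 ^ (l + 1)), i < j ∧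
      x = ⁅QuotientGroup.mk' N (g i), QuotientGroup.mk' N (g j)⁆} with hH
  have key := iteratedCommutator_mem_map_derivedSeries H l
    (QuotientGroup.mk' N ∘ g)
    (fun i j hij => Subgroup.subset_closure ⟨i, j, hij, rfl⟩)
  rw [hsolv] at key
  simp only [Subgroup.map_bot, Subgroup.mem_bot] at key
  rw [← map_iteratedCommutator] at key
  rwa [← QuotientGroup.eq_one_iff]
end
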